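/- Let n, d, a₁, a₂, m be natural numbers with a₁ ≤ d ≤ n and a₂ + d + 1 ≤ n. Then for every real number x, ∑_{j=a₁+a₂}^{n−m} C(n−j, m)·[C(d−a₁, j−a₁−a₂−1) − C(d−a₁, j−a₁−a₂)]·x^{n−j−m} = (1/m!)·(iteratedDeriv m g)(x), where g : ℝ → ℝ is the polynomial function g(x) = (1−x)·x^{n−d−a₂−1}·(1+x)^{d−a₁}, the indices inside the binomial coefficients are treated as integers, and binomial coefficients with negative lower index are taken to be zero. -/

import Mathlib

/-!
Reflecting `j ↦ n - j` and using the symmetry `C(p, q) = C(p, p - q)`, the bracket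
`Γ^j_a` becomes the coefficient of `X^(n-j)` in `P = (1 - X) X^K (1 + X)^D`, where
`K = n - d - a₂ - 1` and `D = d - a₁`. The left side is then the value at `x` of the
`m`-th Hasse derivative of `P`, which is `1/m!` times its `m`-th derivative.
-/

/-- Binomial coefficient `C(p, q)` with integer lower index `q`, taken to be
zero when `q < 0` (and, via `Nat.choose`, zero when `q > p`). -/
def zchoose (p : ℕ) (q : ℤ) : ℕ :=
  if 0 ≤ q then p.choose q.toNat else 0

open Polynomial Finset

lemma zchoose_natCast_sub (p a b : ℕ) :
    zchoose p ((a : ℤ) - b) = if b ≤ a then p.choose (a - b) else 0 := by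
  unfold zchoose
  split_ifs with h₀ h
  · rw [show ((a : ℤ) - b).toNat = a - b by omega]
  · omega
  · omega
  · rfl

lemma zchoose_sub_self (p : ℕ) (q : ℤ) : zchoose p (p - q) = zchoose p q := by
  unfold zchoose
  split_ifs with h1 h2 h2
  · rcases le_or_gt q p with hq | hq
    · rw [show (p - q).toNat = p - q.toNat by omega, Nat.choose_symm (by omega)]
    · rw [Nat.choose_eq_zero_of_lt (by omega), Nat.choose_eq_zero_of_lt (by omega)]
  · exact Nat.choose_eq_zero_of_lt (by omega)
  · exact (Nat.choose_eq_zero_of_lt (by omega)).symm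
  · rfl

namespace Polynomial

variable {R : Type*}

lemma coeff_X_pow_mul_one_add_X_pow [Semiring R] (k d t : ℕ) :
    (X ^ k * (1 + X) ^ d : R[X]).coeff t = zchoose d ((t : ℤ) - k) := by
  rw [coeff_X_pow_mul', coeff_one_add_X_pow, zchoose_natCast_sub]
  split_ifs <;> simp

lemma coeff_one_sub_X_mul_X_pow_mul_one_add_X_pow [Ring R] (k d t : ℕ) :
    ((1 - X) * X ^ k * (1 + X) ^ d : R[X]).coeff t
      = zchoose d ((t : ℤ) - k) - zchoose d ((t : ℤ) - k - 1) := by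
  rw [sub_mul, sub_mul, one_mul, ← pow_succ', coeff_sub, coeff_X_pow_mul_one_add_X_pow,
    coeff_X_pow_mul_one_add_X_pow]
  push_cast
  rw [sub_sub]

lemma natDegree_one_sub_X_mul_X_pow_mul_one_add_X_pow [Ring R] (k d : ℕ) :
    ((1 - X) * X ^ k * (1 + X) ^ d : R[X]).natDegree ≤ k + d + 1 := by
  compute_degree
  omega

lemma eval_hasseDeriv_eq_sum_range [CommSemiring R] (p : R[X]) (k : ℕ) (x : R) {N : ℕ}
    (hN : p.natDegree < N) :
    (hasseDeriv k p).eval x = ∑ t ∈ range N, (t.choose k : R) * p.coeff t * x ^ (t - k) := by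
  rw [hasseDeriv_apply, eval_sum, sum_over_range' _ (by simp) N hN]
  simp

variable {𝕜 : Type*} [NontriviallyNormedField 𝕜]

lemma iter_deriv_eval (p : 𝕜[X]) (k : ℕ) :
    deriv^[k] (fun y => p.eval y) = fun y => (derivative^[k] p).eval y := by
  induction k generalizing p with
  | zero => rfl
  | succ k ih =>
    rw [Function.iterate_succ_apply, Function.iterate_succ_apply, ← ih]
    congr
    funext y
    exact p.deriv

lemma iteratedDeriv_eval_eq_factorial_mul_hasseDeriv (p : 𝕜[X]) (k : ℕ) (x : 𝕜) :
    iteratedDeriv k (fun y => p.eval y) x = k.factorial * (hasseDeriv k p).eval x := by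
  rw [iteratedDeriv_eq_iterate, iter_deriv_eval, ← factorial_smul_hasseDeriv]
  simp

end Polynomial

theorem sum_gamma_choose_eq_iteratedDeriv_general
    (n d a₁ a₂ m : ℕ) (h₁ : a₁ ≤ d) (h₃ : a₂ + d + 1 ≤ n) (x : ℝ) :
    ∑ j ∈ Finset.Icc (a₁ + a₂) (n - m),
      ((n - j).choose m : ℝ) *
        ((zchoose (d - a₁) ((j : ℤ) - a₁ - a₂ - 1) : ℝ)
          - (zchoose (d - a₁) ((j : ℤ) - a₁ - a₂) : ℝ)) * x ^ (n - j - m)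
    = (1 / (m.factorial : ℝ)) *
        iteratedDeriv m
          (fun y : ℝ => (1 - y) * y ^ (n - d - a₂ - 1) * (1 + y) ^ (d - a₁)) x := by
  generalize hD : d - a₁ = D
  generalize hK : n - d - a₂ - 1 = K
  set P : ℝ[X] := (1 - X) * X ^ K * (1 + X) ^ D
  set F : ℕ → ℝ := fun t => (t.choose m : ℝ) * P.coeff t * x ^ (t - m)
  have hP : (fun y : ℝ => (1 - y) * y ^ K * (1 + y) ^ D) = fun y => P.eval y := by
    funext y
    simp [P]
  calc _ = ∑ j ∈ Icc (a₁ + a₂) (n - m), F (n - j) := by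
        refine sum_congr rfl fun j hj => ?_
        rw [mem_Icc] at hj
        simp only [F, P, coeff_one_sub_X_mul_X_pow_mul_one_add_X_pow,
          ← zchoose_sub_self D ((j : ℤ) - a₁ - a₂ - 1), ← zchoose_sub_self D ((j : ℤ) - a₁ - a₂)]
        congr 5 <;> omega
    _ = ∑ j ∈ Ico (a₁ + a₂) (n + 1), F (n - j) := by
        refine sum_subset (fun j hj => ?_) fun j hj hj' => ?_
        · simp only [mem_Icc, mem_Ico] at hj ⊢
          omega
        · simp only [mem_Icc, mem_Ico, not_and, not_le] at hj hj'
          simp [F, Nat.choose_eq_zero_of_lt (show n - j < m by omega)]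
    _ = ∑ t ∈ range (K + D + 2), F t := by
        rw [sum_Ico_reflect _ _ le_rfl, Nat.sub_self, show n + 1 - (a₁ + a₂) = K + D + 2 by omega,
          range_eq_Ico]
    _ = (hasseDeriv m P).eval x :=
        (eval_hasseDeriv_eq_sum_range P m x
          (Nat.lt_succ_of_le (natDegree_one_sub_X_mul_X_pow_mul_one_add_X_pow K D))).symm
    _ = _ := by
      rw [hP, iteratedDeriv_eval_eq_factorial_mul_hasseDeriv]
      field_simp

/-- For natural numbers `n, d, a₁, a₂, m` with `a₁ ≤ d ≤ n` and `a₂ + d + 1 ≤ n`,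
and every real `x`,
`∑_{j=a₁+a₂}^{n-m} C(n-j, m) · [C(d-a₁, j-a₁-a₂-1) - C(d-a₁, j-a₁-a₂)] · x^(n-j-m)`
equals `(1/m!) · (d^m/dx^m) [(1-x) x^(n-d-a₂-1) (1+x)^(d-a₁)]`, where the indices
inside the binomial coefficients are treated as integers, binomial coefficients
with negative lower index being zero. -/
theorem sum_gamma_choose_eq_iteratedDeriv
    (n d a₁ a₂ m : ℕ) (h₁ : a₁ ≤ d) (h₂ : d ≤ n) (h₃ : a₂ + d + 1 ≤ n) (x : ℝ) :
    ∑ j ∈ Finset.Icc (a₁ + a₂) (n - m),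
      ((n - j).choose m : ℝ) *
        ((zchoose (d - a₁) ((j : ℤ) - a₁ - a₂ - 1) : ℝ)
          - (zchoose (d - a₁) ((j : ℤ) - a₁ - a₂) : ℝ)) * x ^ (n - j - m)
    = (1 / (m.factorial : ℝ)) *
        iteratedDeriv m
          (fun y : ℝ => (1 - y) * y ^ (n - d - a₂ - 1) * (1 + y) ^ (d - a₁)) x :=
  sum_gamma_choose_eq_iteratedDeriv_general n d a₁ a₂ m h₁ h₃ x
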